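/- Let (𝒫₁, …, 𝒫_ℓ) be a nice ordered family of ℓ-tuples of integer polynomials, containing no ℓ-tuple of constant polynomials, with 𝒫_i = (p_{i,1}, …, p_{i,m}) for i = 1,…,ℓ, and suppose deg(p_{1,1}) ≥ 2. Then there exists an ℓ-tuple (p₁, …, p_ℓ) ∈ (𝒫₁, …, 𝒫_ℓ) such that for every sufficiently large h ∈ ℕ, the family (p₁,…,p_ℓ,h)-vdC(𝒫₁,…,𝒫_ℓ) is nice and has strictly smaller type than (𝒫₁, …, 𝒫_ℓ). -/

import Mathlib

/-!
Let `i₀` be the last index with `𝒫'_{i₀}` non-empty and let `g` be a tuple of `𝒫'_{i₀}` whose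
entry `g_{i₀}` has the minimal degree `d₀`. As `g` is constant below `i₀`, subtracting it (after
shifting or not) changes neither the classes of the rows `i < i₀` nor those of degree `> d₀` in
row `i₀`, while in degree `d₀` the class of `g_{i₀}` disappears and the others are translated by
`-lc g_{i₀}`; by the choice of `i₀` and `d₀` no new class of degree `d₀` appears. So `w_{i₀,d₀}`
drops, for every `h`.

Niceness is where the choice among the minimisers and the size of `h` matter; the head of the new
family is `S_h p_{·,1} - g`. If some minimiser has `deg (p_{1,1} - g_1) = deg p_{1,1} = d`, the
head keeps degree `d` and everything else has degree `≤ d`. Otherwise `i₀ = 0`, `d₀ = d`, every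
first entry is `∼ p_{1,1}`, and `g = p_{·,1}` works: for large `h` the head
`S_h p_{1,1} - p_{1,1}` has degree exactly `d - 1`, because its coefficient of degree `d - 1` is a
non-constant polynomial in `h`. Condition (3) does not involve `g`, since
`(S_h p_{·,1} - g) - (x - g) = S_h p_{·,1} - x`.
-/

open Polynomial

/-- An `ℓ`-tuple of integer polynomials. -/
abbrev PolyTuple (ℓ : ℕ) := Fin ℓ → Polynomial ℤ

/-- The shift `S_h p = p(t + h)`. -/
noncomputable def polyShift (h : ℕ) (p : Polynomial ℤ) : Polynomial ℤ :=
  p.comp (Polynomial.X + Polynomial.C (h : ℤ))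

/-- An `ℓ`-tuple of polynomials is constant when all entries are constant
(the degree of a constant polynomial, including `0`, is `0`). -/
def IsConstTuple {ℓ : ℕ} (t : PolyTuple ℓ) : Prop := ∀ i, (t i).natDegree = 0

/-- The degree of a family of `ℓ`-tuples: the maximum degree of all its polynomials. -/
noncomputable def famDegree {ℓ : ℕ} (F : List (PolyTuple ℓ)) : ℕ :=
  (F.map fun t => Finset.univ.sup fun i => (t i).natDegree).foldr max 0

/-- `w_{i,j}`: the number of equivalence classes (same degree and leading coefficient)
of polynomials of degree `j` in `𝒫ᵢ' = {p_{i,j} : p_{i,j}` non-constant and `p_{i',j}`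
constant for all `i' < i}`. -/
noncomputable def wRow {ℓ : ℕ} (F : List (PolyTuple ℓ)) (i : Fin ℓ) (j : ℕ) : ℕ :=
  (((F.filter fun t => decide
        ((∀ i' : Fin ℓ, i' < i → (t i').natDegree = 0) ∧
          (t i).natDegree ≠ 0 ∧ (t i).natDegree = j)).map
      fun t => (t i).leadingCoeff).dedup).length

/-- The type of the family relative to degree `d`: the `ℓ × d` matrix `(w_{i,j})`,
row by row, each row listing `w_{i,d}, …, w_{i,1}`; compared lexicographically. -/
noncomputable def typeList {ℓ : ℕ} (d : ℕ) (F : List (PolyTuple ℓ)) : List ℕ :=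
  ((List.finRange ℓ).map fun i => (List.range d).map fun k => wRow F i (d - k)).flatten

/-- A family of `ℓ`-tuples `(t₁, …, t_m)` is *nice* if (1) `deg t₁(0) ≥ deg tⱼ(0)`;
(2) `deg t₁(0) > deg tⱼ(i)` for `i ≠ 0`; and (3) `deg (t₁(0) - tⱼ(0)) > deg (t₁(i) - tⱼ(i))`
for `i ≠ 0` and `j ≥ 2`. -/
def NiceTupleFamily {ℓ : ℕ} [NeZero ℓ] (F : List (PolyTuple ℓ)) : Prop :=
  ∃ t₁ rest, F = t₁ :: rest ∧
    (∀ t ∈ F, (t 0).natDegree ≤ (t₁ 0).natDegree) ∧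
    (∀ t ∈ F, ∀ i : Fin ℓ, i ≠ 0 → (t i).natDegree < (t₁ 0).natDegree) ∧
    (∀ t ∈ rest, ∀ i : Fin ℓ, i ≠ 0 → (t₁ i - t i).natDegree < (t₁ 0 - t 0).natDegree)

/-- The van der Corput operation `(p₁,…,p_ℓ,h)-vdC(𝒫₁,…,𝒫_ℓ)`: form the
shifted-and-translated family and remove all constant `ℓ`-tuples. -/
noncomputable def vdcOp {ℓ : ℕ} (g : PolyTuple ℓ) (h : ℕ) (F : List (PolyTuple ℓ)) :
    List (PolyTuple ℓ) :=
  ((F.map fun t => fun i => polyShift h (t i) - g i) ++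
      (F.map fun t => fun i => t i - g i)).filter
    fun t => !decide (∀ i, (t i).natDegree = 0)

open Filter

section PolyShift

lemma polyShift_eq_taylor (h : ℕ) (p : ℤ[X]) : polyShift h p = taylor (h : ℤ) p := rfl

lemma natDegree_polyShift (h : ℕ) (p : ℤ[X]) : (polyShift h p).natDegree = p.natDegree := by
  rw [polyShift_eq_taylor, natDegree_taylor]

lemma leadingCoeff_polyShift (h : ℕ) (p : ℤ[X]) :
    (polyShift h p).leadingCoeff = p.leadingCoeff := by
  rw [polyShift_eq_taylor, leadingCoeff_taylor]

lemma polyShift_sub (h : ℕ) (p q : ℤ[X]) :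
    polyShift h (p - q) = polyShift h p - polyShift h q := by
  simp only [polyShift_eq_taylor, map_sub]

lemma natDegree_polyShift_sub_le (h : ℕ) (p q : ℤ[X]) :
    (polyShift h p - q).natDegree ≤ max p.natDegree q.natDegree :=
  natDegree_polyShift h p ▸ natDegree_sub_le _ _

lemma natDegree_polyShift_sub_self_le (h : ℕ) (p : ℤ[X]) :
    (polyShift h p - p).natDegree ≤ p.natDegree - 1 := by
  rcases Nat.eq_zero_or_pos p.natDegree with hp | hp
  · rw [eq_C_of_natDegree_eq_zero hp]
    simp [polyShift]
  rw [polyShift_eq_taylor]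
  by_cases hz : taylor (h : ℤ) p - p = 0
  · simp [hz]
  have hp0 : p ≠ 0 := ne_zero_of_natDegree_gt hp
  have hlt := degree_sub_lt_left (degree_taylor p (h : ℤ))
    ((taylor_eq_zero (h : ℤ) p).not.mpr hp0) (leadingCoeff_taylor (h : ℤ) p)
  rw [degree_taylor] at hlt
  have := natDegree_lt_natDegree hz hlt
  omega

lemma natDegree_polyShift_sub_le_max (h : ℕ) (p q : ℤ[X]) :
    (polyShift h p - q).natDegree ≤ max (p.natDegree - 1) (p - q).natDegree := by
  rw [show polyShift h p - q = (polyShift h p - p) + (p - q) by ring]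
  exact (natDegree_add_le _ _).trans (max_le_max_right _ (natDegree_polyShift_sub_self_le h p))

lemma natDegree_polyShift_sub_eq (h : ℕ) {p q : ℤ[X]} (hpq : p.natDegree ≤ (p - q).natDegree) :
    (polyShift h p - q).natDegree = (p - q).natDegree := by
  rcases Nat.eq_zero_or_pos (p - q).natDegree with h0 | hpos
  · have := natDegree_polyShift_sub_le_max h p q
    omega
  rw [show polyShift h p - q = (polyShift h p - p) + (p - q) by ring]
  exact natDegree_add_eq_right_of_natDegree_lt
    ((natDegree_polyShift_sub_self_le h p).trans_lt (by omega))

lemma eventually_coeff_polyShift_sub_ne_zero {p : ℤ[X]} {n : ℕ} (hp : p.natDegree = n + 1)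
    (q : ℤ[X]) :
    ∀ᶠ h : ℕ in atTop, (polyShift h p - q).coeff n ≠ 0 := by
  -- this coefficient is the value at `h` of a polynomial of degree one
  set H := hasseDeriv n p - C (q.coeff n)
  have hH : H ≠ 0 := by
    refine ne_zero_of_natDegree_gt (n := 0) ?_
    rw [natDegree_sub_C, natDegree_hasseDeriv, hp]
    omega
  have hcoeff : ∀ h : ℕ, (polyShift h p - q).coeff n = H.eval (h : ℤ) := by
    intro h
    simp [H, polyShift_eq_taylor, taylor_coeff]
  have hroots : {h : ℕ | H.IsRoot h}.Finite :=
    (finite_setOfPred_isRoot hH).preimage Nat.cast_injective.injOn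
  rw [← Nat.cofinite_eq_atTop]
  filter_upwards [hroots.eventually_cofinite_notMem] with h hh
  rw [hcoeff]
  exact hh

lemma eventually_natDegree_polyShift_sub_eq {p q : ℤ[X]} {n : ℕ} (hp : p.natDegree = n + 1)
    (hpq : (p - q).natDegree ≤ n) :
    ∀ᶠ h : ℕ in atTop, (polyShift h p - q).natDegree = n := by
  filter_upwards [eventually_coeff_polyShift_sub_ne_zero hp q] with h hh
  have := natDegree_polyShift_sub_le_max h p q
  exact le_antisymm (by omega) (le_natDegree_of_ne_zero hh)

end PolyShift

section TypeList

variable {ℓ : ℕ}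

def ConstBelow (t : PolyTuple ℓ) (i : Fin ℓ) : Prop := ∀ i' < i, (t i').natDegree = 0

/-- The leading coefficients labelling the equivalence classes counted by `wRow F i j`. -/
noncomputable def classCoeffs (F : List (PolyTuple ℓ)) (i : Fin ℓ) (j : ℕ) : Finset ℤ :=
  ((F.filter fun t => decide
        ((∀ i' : Fin ℓ, i' < i → (t i').natDegree = 0) ∧
          (t i).natDegree ≠ 0 ∧ (t i).natDegree = j)).map
      fun t => (t i).leadingCoeff).toFinset

lemma wRow_eq_card_classCoeffs (F : List (PolyTuple ℓ)) (i : Fin ℓ) (j : ℕ) :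
    wRow F i j = (classCoeffs F i j).card := by
  rw [wRow, classCoeffs, List.card_toFinset]

lemma mem_classCoeffs {F : List (PolyTuple ℓ)} {i : Fin ℓ} {j : ℕ} {c : ℤ} :
    c ∈ classCoeffs F i j ↔ ∃ t ∈ F, ConstBelow t i ∧
      (t i).natDegree ≠ 0 ∧ (t i).natDegree = j ∧ (t i).leadingCoeff = c := by
  simp only [classCoeffs, List.mem_toFinset, List.mem_map, List.mem_filter, decide_eq_true_eq,
    ConstBelow]
  constructor
  · rintro ⟨t, ⟨ht, h⟩, rfl⟩
    exact ⟨t, ht, h.1, h.2.1, h.2.2, rfl⟩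
  · rintro ⟨t, ht, h₁, h₂, h₃, rfl⟩
    exact ⟨t, ⟨ht, h₁, h₂, h₃⟩, rfl⟩

lemma List.lex_map_of_pairwise {α β : Type*} {R : α → α → Prop} {r : β → β → Prop}
    {l : List α} (hl : l.Pairwise R) {x : α} (hx : x ∈ l) {f g : α → β}
    (hfg : ∀ y ∈ l, R y x → f y = g y) (hfgx : r (f x) (g x)) :
    List.Lex r (l.map f) (l.map g) := by
  induction l with
  | nil => simp at hx
  | cons y l ih =>
    rw [List.pairwise_cons] at hl
    by_cases hxy : x = y
    · subst hxy
      exact List.Lex.rel hfgx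
    have hx' : x ∈ l := (List.mem_cons.mp hx).resolve_left hxy
    rw [List.map_cons, List.map_cons, hfg y List.mem_cons_self (hl.1 x hx')]
    exact List.Lex.cons (ih hl.2 hx' fun z hz => hfg z (List.mem_cons_of_mem y hz))

lemma typeList_eq_map (d : ℕ) (F : List (PolyTuple ℓ)) :
    typeList d F = ((List.finRange ℓ).flatMap fun i => (List.range d).map fun k => (i, k)).map
      fun p => wRow F p.1 (d - p.2) := by
  simp [typeList, List.flatMap, List.map_flatten, Function.comp_def]

lemma typeList_lex_lt {F G : List (PolyTuple ℓ)} {d : ℕ} {i₀ : Fin ℓ} {j₀ : ℕ}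
    (hj₀ : j₀ ≠ 0) (hj₀d : j₀ ≤ d)
    (hrow : ∀ i < i₀, ∀ j, 0 < j → wRow G i j = wRow F i j)
    (hcol : ∀ j, j₀ < j → wRow G i₀ j = wRow F i₀ j)
    (hlt : wRow G i₀ j₀ < wRow F i₀ j₀) :
    List.Lex (· < ·) (typeList d G) (typeList d F) := by
  rw [typeList_eq_map, typeList_eq_map]
  refine List.lex_map_of_pairwise (R := fun p q => p.1 < q.1 ∨ p.1 = q.1 ∧ p.2 < q.2)
    (x := (i₀, d - j₀)) ?_ ?_ ?_ (by simpa [Nat.sub_sub_self hj₀d] using hlt)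
  · refine List.pairwise_flatMap.mpr ⟨fun i _ => ?_, ?_⟩
    · exact List.pairwise_map.mpr (List.pairwise_lt_range.imp fun hk => Or.inr ⟨rfl, hk⟩)
    · refine (List.pairwise_lt_finRange ℓ).imp fun hi => ?_
      simp only [List.mem_map]
      rintro _ ⟨k, -, rfl⟩ _ ⟨k', -, rfl⟩
      exact Or.inl hi
  · simp only [List.mem_flatMap, List.mem_map, List.mem_range, List.mem_finRange, true_and]
    exact ⟨i₀, d - j₀, by omega, rfl⟩
  · intro y hy hlex
    simp only [List.mem_flatMap, List.mem_map, List.mem_range] at hy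
    obtain ⟨i, -, k, hk, rfl⟩ := hy
    rcases hlex with hi | ⟨rfl, hk'⟩
    · exact hrow i hi _ (by omega)
    · exact hcol _ (by omega)

end TypeList

section VdcType

variable {ℓ : ℕ} {g : PolyTuple ℓ} {h : ℕ} {F : List (PolyTuple ℓ)}

lemma mem_vdcOp {x : PolyTuple ℓ} : x ∈ vdcOp g h F ↔
    (∃ t ∈ F, x = (fun i => polyShift h (t i) - g i) ∨ x = fun i => t i - g i) ∧
      ¬ IsConstTuple x := by
  simp only [vdcOp, List.mem_filter, List.mem_append, List.mem_map, IsConstTuple,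
    Bool.not_eq_eq_eq_not, Bool.not_true, decide_eq_false_iff_not]
  constructor
  · rintro ⟨⟨t, ht, rfl⟩ | ⟨t, ht, rfl⟩, hc⟩
    exacts [⟨⟨t, ht, Or.inl rfl⟩, hc⟩, ⟨⟨t, ht, Or.inr rfl⟩, hc⟩]
  · rintro ⟨⟨t, ht, rfl | rfl⟩, hc⟩
    exacts [⟨Or.inl ⟨t, ht, rfl⟩, hc⟩, ⟨Or.inr ⟨t, ht, rfl⟩, hc⟩]

lemma sub_mem_vdcOp {t : PolyTuple ℓ} (ht : t ∈ F) {i : Fin ℓ}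
    (hi : (t i - g i).natDegree ≠ 0) : (fun i => t i - g i) ∈ vdcOp g h F :=
  mem_vdcOp.mpr ⟨⟨t, ht, Or.inr rfl⟩, fun hc => hi (hc i)⟩

lemma exists_of_mem_vdcOp {x : PolyTuple ℓ} (hx : x ∈ vdcOp g h F) :
    ∃ t ∈ F, ∃ s : PolyTuple ℓ, (x = fun i => s i - g i) ∧
      ∀ i, (s i).natDegree = (t i).natDegree ∧ (s i).leadingCoeff = (t i).leadingCoeff := by
  obtain ⟨⟨t, ht, rfl | rfl⟩, -⟩ := mem_vdcOp.mp hx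
  · exact ⟨t, ht, fun i => polyShift h (t i), rfl,
      fun i => ⟨natDegree_polyShift h (t i), leadingCoeff_polyShift h (t i)⟩⟩
  · exact ⟨t, ht, t, rfl, fun _ => ⟨rfl, rfl⟩⟩

lemma natDegree_eq_zero_of_sub {p q : ℤ[X]} (hq : q.natDegree = 0)
    (hpq : (p - q).natDegree = 0) : p.natDegree = 0 := by
  have := natDegree_add_le (p - q) q
  rw [sub_add_cancel, hq, hpq] at this
  omega

lemma natDegree_sub_eq_zero {p q : ℤ[X]} (hp : p.natDegree = 0) (hq : q.natDegree = 0) :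
    (p - q).natDegree = 0 := by
  have := natDegree_sub_le p q
  omega

variable {i₀ : Fin ℓ} {d₀ : ℕ}

lemma constBelow_of_sub {s t : PolyTuple ℓ} {i : Fin ℓ} (hg : ConstBelow g i₀) (hi : i ≤ i₀)
    (hx : ConstBelow (fun i => s i - g i) i) (hst : ∀ i, (s i).natDegree = (t i).natDegree) :
    ConstBelow t i := fun i' hi' =>
  hst i' ▸ natDegree_eq_zero_of_sub (hg i' (hi'.trans_le hi)) (hx i' hi')

lemma constBelow_sub {t : PolyTuple ℓ} {i : Fin ℓ} (hg : ConstBelow g i₀) (hi : i ≤ i₀)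
    (ht : ConstBelow t i) : ConstBelow (fun i => t i - g i) i := fun i' hi' =>
  natDegree_sub_eq_zero (ht i' hi') (hg i' (hi'.trans_le hi))

lemma exists_of_mem_classCoeffs_vdcOp (hg : ConstBelow g i₀) {i : Fin ℓ} (hi : i ≤ i₀)
    {j : ℕ} {c : ℤ} (hc : c ∈ classCoeffs (vdcOp g h F) i j) :
    ∃ t ∈ F, ConstBelow t i ∧ ∃ p : ℤ[X], p.natDegree = (t i).natDegree ∧
      p.leadingCoeff = (t i).leadingCoeff ∧ (p - g i).natDegree ≠ 0 ∧
      (p - g i).natDegree = j ∧ (p - g i).leadingCoeff = c := by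
  obtain ⟨x, hx, hxc, hxi, rfl, rfl⟩ := mem_classCoeffs.mp hc
  obtain ⟨t, ht, s, rfl, hst⟩ := exists_of_mem_vdcOp hx
  exact ⟨t, ht, constBelow_of_sub hg hi hxc fun i => (hst i).1, s i, (hst i).1, (hst i).2, hxi,
    rfl, rfl⟩

lemma classCoeffs_vdcOp_of_natDegree_lt (hg : ConstBelow g i₀) {i : Fin ℓ} (hi : i ≤ i₀)
    {j : ℕ} (hj : (g i).natDegree < j) :
    classCoeffs (vdcOp g h F) i j = classCoeffs F i j := by
  ext c
  constructor
  · intro hc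
    obtain ⟨t, ht, htc, p, hpt, hpl, -, rfl, rfl⟩ := exists_of_mem_classCoeffs_vdcOp hg hi hc
    have hlt : (g i).natDegree < p.natDegree := by
      have := natDegree_sub_le p (g i)
      omega
    rw [natDegree_sub_eq_left_of_natDegree_lt hlt,
      leadingCoeff_sub_of_degree_lt (degree_lt_degree hlt)]
    exact mem_classCoeffs.mpr ⟨t, ht, htc, by omega, hpt.symm, hpl.symm⟩
  · intro hc
    obtain ⟨t, ht, htc, hti, rfl, rfl⟩ := mem_classCoeffs.mp hc
    have hdeg := natDegree_sub_eq_left_of_natDegree_lt hj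
    have hne : (t i - g i).natDegree ≠ 0 := by omega
    exact mem_classCoeffs.mpr ⟨_, sub_mem_vdcOp ht hne, constBelow_sub hg hi htc, hne, hdeg,
      leadingCoeff_sub_of_degree_lt (degree_lt_degree hj)⟩

lemma classCoeffs_vdcOp_subset (hg : ConstBelow g i₀) (hgd : (g i₀).natDegree = d₀)
    (hmin : ∀ t ∈ F, ConstBelow t i₀ → d₀ ≤ (t i₀).natDegree) :
    classCoeffs (vdcOp g h F) i₀ d₀ ⊆
      ((classCoeffs F i₀ d₀).erase (g i₀).leadingCoeff).image (· - (g i₀).leadingCoeff) := by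
  intro c hc
  obtain ⟨t, ht, htc, p, hpt, hpl, hne, hpd, rfl⟩ := exists_of_mem_classCoeffs_vdcOp hg le_rfl hc
  have hp : p.natDegree = d₀ := by
    have := hmin t ht htc
    by_contra hp
    have := natDegree_sub_eq_left_of_natDegree_lt (p := p) (q := g i₀) (by omega)
    omega
  have hlc : (p - g i₀).leadingCoeff = p.leadingCoeff - (g i₀).leadingCoeff := by
    simp only [leadingCoeff, hp, hgd, hpd, coeff_sub]
  have hlc0 : (p - g i₀).leadingCoeff ≠ 0 :=
    leadingCoeff_ne_zero.mpr fun h0 => hne (by rw [h0, natDegree_zero])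
  refine Finset.mem_image.mpr ⟨p.leadingCoeff, Finset.mem_erase.mpr ⟨?_, ?_⟩, hlc.symm⟩
  · exact fun h0 => hlc0 (by rw [hlc, h0, sub_self])
  · exact mem_classCoeffs.mpr ⟨t, ht, htc, by omega, by omega, hpl.symm⟩

lemma card_classCoeffs_vdcOp_lt (hgF : g ∈ F) (hg : ConstBelow g i₀)
    (hgd : (g i₀).natDegree = d₀) (hmin : ∀ t ∈ F, ConstBelow t i₀ → d₀ ≤ (t i₀).natDegree)
    (hd₀ : d₀ ≠ 0) :
    (classCoeffs (vdcOp g h F) i₀ d₀).card < (classCoeffs F i₀ d₀).card :=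
  calc (classCoeffs (vdcOp g h F) i₀ d₀).card
      ≤ ((classCoeffs F i₀ d₀).erase (g i₀).leadingCoeff).card :=
        (Finset.card_le_card (classCoeffs_vdcOp_subset hg hgd hmin)).trans Finset.card_image_le
    _ < (classCoeffs F i₀ d₀).card := Finset.card_erase_lt_of_mem
        (mem_classCoeffs.mpr ⟨g, hgF, hg, by omega, hgd, rfl⟩)

lemma typeList_vdcOp_lt (hgF : g ∈ F) (hg : ConstBelow g i₀) (hgd : (g i₀).natDegree = d₀)
    (hmin : ∀ t ∈ F, ConstBelow t i₀ → d₀ ≤ (t i₀).natDegree) (hd₀ : d₀ ≠ 0) {d : ℕ}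
    (hd₀d : d₀ ≤ d) :
    List.Lex (· < ·) (typeList d (vdcOp g h F)) (typeList d F) := by
  refine typeList_lex_lt (i₀ := i₀) hd₀ hd₀d (fun i hi j hj => ?_) (fun j hj => ?_) ?_ <;>
    rw [wRow_eq_card_classCoeffs, wRow_eq_card_classCoeffs]
  · rw [classCoeffs_vdcOp_of_natDegree_lt hg hi.le (by rw [hg i hi]; exact hj)]
  · rw [classCoeffs_vdcOp_of_natDegree_lt hg le_rfl (hgd ▸ hj)]
  · exact card_classCoeffs_vdcOp_lt hgF hg hgd hmin hd₀

end VdcType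

lemma List.forall_mem_cons_map_append_map {α β : Type*} {P : β → Prop} {f₁ f₂ : α → β}
    {a : α} {l : List α} :
    (∀ x ∈ f₁ a :: (l.map f₁ ++ (a :: l).map f₂), P x) ↔ ∀ t ∈ a :: l, P (f₁ t) ∧ P (f₂ t) := by
  simp only [List.forall_mem_cons, List.forall_mem_append, List.forall_mem_map, List.map_cons,
    forall₂_and]
  tauto

section Nice

variable {ℓ : ℕ} [NeZero ℓ] {t₁ g : PolyTuple ℓ} {rest : List (PolyTuple ℓ)}

lemma niceTupleFamily_cons_iff :
    NiceTupleFamily (t₁ :: rest) ↔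
      (∀ t ∈ t₁ :: rest, (t 0).natDegree ≤ (t₁ 0).natDegree) ∧
      (∀ t ∈ t₁ :: rest, ∀ i : Fin ℓ, i ≠ 0 → (t i).natDegree < (t₁ 0).natDegree) ∧
      (∀ t ∈ rest, ∀ i : Fin ℓ, i ≠ 0 → (t₁ i - t i).natDegree < (t₁ 0 - t 0).natDegree) := by
  constructor
  · rintro ⟨_, _, hF, hc⟩
    obtain ⟨rfl, rfl⟩ := List.cons.inj hF
    exact hc
  · exact fun hc => ⟨t₁, rest, rfl, hc⟩

lemma NiceTupleFamily.cons_of_subset (hF : NiceTupleFamily (t₁ :: rest))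
    {rest' : List (PolyTuple ℓ)} (hsub : rest' ⊆ rest) : NiceTupleFamily (t₁ :: rest') := by
  obtain ⟨h1, h2, h3⟩ := niceTupleFamily_cons_iff.mp hF
  have hsub' := List.cons_subset_cons t₁ hsub
  exact niceTupleFamily_cons_iff.mpr
    ⟨fun t ht => h1 t (hsub' ht), fun t ht => h2 t (hsub' ht), fun t ht => h3 t (hsub ht)⟩

lemma NiceTupleFamily.filter_cons (hF : NiceTupleFamily (t₁ :: rest)) {p : PolyTuple ℓ → Bool}
    (hp : p t₁) : NiceTupleFamily ((t₁ :: rest).filter p) := by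
  rw [List.filter_cons_of_pos hp]
  exact hF.cons_of_subset (List.filter_subset_self rest)

lemma natDegree_sub_lt_pred_of_niceTupleFamily (hF : NiceTupleFamily (t₁ :: rest))
    (hd : 2 ≤ (t₁ 0).natDegree) {t : PolyTuple ℓ} (ht : t ∈ t₁ :: rest)
    (hlt : (t₁ 0 - t 0).natDegree < (t₁ 0).natDegree) {i : Fin ℓ} (hi : i ≠ 0) :
    (t₁ i - t i).natDegree < (t₁ 0).natDegree - 1 := by
  rcases List.mem_cons.mp ht with rfl | ht
  · simp only [sub_self, natDegree_zero]
    omega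
  · have := (niceTupleFamily_cons_iff.mp hF).2.2 t ht i hi
    omega

lemma eventually_natDegree_polyShift_head_sub_lt (hF : NiceTupleFamily (t₁ :: rest))
    (hd : 2 ≤ (t₁ 0).natDegree) {t : PolyTuple ℓ} (ht : t ∈ t₁ :: rest) :
    ∀ᶠ h : ℕ in atTop, ∀ i : Fin ℓ, i ≠ 0 →
      (polyShift h (t₁ i) - t i).natDegree < (polyShift h (t₁ 0) - t 0).natDegree := by
  obtain ⟨h1, h2, -⟩ := niceTupleFamily_cons_iff.mp hF
  have ht₁ : t₁ ∈ t₁ :: rest := List.mem_cons_self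
  by_cases hlt : (t₁ 0 - t 0).natDegree < (t₁ 0).natDegree
  · filter_upwards [eventually_natDegree_polyShift_sub_eq (p := t₁ 0) (q := t 0)
      (n := (t₁ 0).natDegree - 1) (by omega) (by omega)] with h hh i hi
    have := natDegree_polyShift_sub_le_max h (t₁ i) (t i)
    have := h2 t₁ ht₁ i hi
    have := natDegree_sub_lt_pred_of_niceTupleFamily hF hd ht hlt hi
    omega
  · have hdeg : (t₁ 0 - t 0).natDegree = (t₁ 0).natDegree := by
      have := natDegree_sub_le (t₁ 0) (t 0)
      have := h1 t ht
      omega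
    refine Eventually.of_forall fun h i hi => ?_
    rw [natDegree_polyShift_sub_eq h hdeg.ge, hdeg]
    have := natDegree_polyShift_sub_le h (t₁ i) (t i)
    have := h2 t₁ ht₁ i hi
    have := h2 t ht i hi
    omega

lemma niceTupleFamily_vdcOp_of_bounds (hF : NiceTupleFamily (t₁ :: rest)) {h : ℕ}
    (hD : (polyShift h (t₁ 0) - g 0).natDegree ≠ 0)
    (hzero : ∀ t ∈ t₁ :: rest,
      (polyShift h (t 0) - g 0).natDegree ≤ (polyShift h (t₁ 0) - g 0).natDegree ∧
      (t 0 - g 0).natDegree ≤ (polyShift h (t₁ 0) - g 0).natDegree)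
    (hnonzero : ∀ t ∈ t₁ :: rest, ∀ i : Fin ℓ, i ≠ 0 →
      (polyShift h (t i) - g i).natDegree < (polyShift h (t₁ 0) - g 0).natDegree ∧
      (t i - g i).natDegree < (polyShift h (t₁ 0) - g 0).natDegree)
    (hhead : ∀ t ∈ t₁ :: rest, ∀ i : Fin ℓ, i ≠ 0 →
      (polyShift h (t₁ i) - t i).natDegree < (polyShift h (t₁ 0) - t 0).natDegree) :
    NiceTupleFamily (vdcOp g h (t₁ :: rest)) := by
  have hc3 := (niceTupleFamily_cons_iff.mp hF).2.2
  refine NiceTupleFamily.filter_cons (niceTupleFamily_cons_iff.mpr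
    ⟨List.forall_mem_cons_map_append_map.mpr hzero,
      List.forall_mem_cons_map_append_map.mpr fun t ht =>
        ⟨fun i hi => (hnonzero t ht i hi).1, fun i hi => (hnonzero t ht i hi).2⟩, ?_⟩) ?_
  · simp only [List.forall_mem_append, List.forall_mem_map, sub_sub_sub_cancel_right]
    refine ⟨fun t ht i hi => ?_, hhead⟩
    rw [← polyShift_sub, ← polyShift_sub, natDegree_polyShift, natDegree_polyShift]
    exact hc3 t ht i hi
  · simpa using ⟨0, hD⟩

lemma eventually_niceTupleFamily_vdcOp (hF : NiceTupleFamily (t₁ :: rest))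
    (hd : 2 ≤ (t₁ 0).natDegree) (hg : g ∈ t₁ :: rest)
    (hcase : (t₁ 0 - g 0).natDegree = (t₁ 0).natDegree ∨
      g = t₁ ∧ ∀ t ∈ t₁ :: rest, (t₁ 0 - t 0).natDegree < (t₁ 0).natDegree) :
    ∀ᶠ h : ℕ in atTop, NiceTupleFamily (vdcOp g h (t₁ :: rest)) := by
  obtain ⟨h1, h2, -⟩ := niceTupleFamily_cons_iff.mp hF
  have hhead := (t₁ :: rest).finite_toSet.eventually_all.mpr fun t ht =>
    eventually_natDegree_polyShift_head_sub_lt hF hd ht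
  rcases hcase with hdeg | ⟨hgt, hlt⟩
  · filter_upwards [hhead] with h hh
    have hD := (natDegree_polyShift_sub_eq h hdeg.ge).trans hdeg
    refine niceTupleFamily_vdcOp_of_bounds hF (by omega) (fun t ht => ?_) (fun t ht i hi => ?_)
      hh <;> rw [hD]
    · have := natDegree_polyShift_sub_le h (t 0) (g 0)
      have := natDegree_sub_le (t 0) (g 0)
      have := h1 t ht
      have := h1 g hg
      omega
    · have := natDegree_polyShift_sub_le h (t i) (g i)
      have := natDegree_sub_le (t i) (g i)
      have := h2 t ht i hi
      have := h2 g hg i hi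
      omega
  · subst g
    filter_upwards [hhead, eventually_natDegree_polyShift_sub_eq (p := t₁ 0) (q := t₁ 0)
      (n := (t₁ 0).natDegree - 1) (by omega) (by simp)] with h hh hD
    refine niceTupleFamily_vdcOp_of_bounds hF (by omega) (fun t ht => ?_) (fun t ht i hi => ?_)
      hh <;> rw [hD]
    · have := natDegree_polyShift_sub_le_max h (t 0) (t₁ 0)
      have := natDegree_sub.trans_lt (hlt t ht)
      have := h1 t ht
      omega
    · have := natDegree_polyShift_sub_le_max h (t i) (t₁ i)
      have := natDegree_sub.trans_lt
        (natDegree_sub_lt_pred_of_niceTupleFamily hF hd ht (hlt t ht) hi)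
      have := h2 t ht i hi
      omega

end Nice

section Pivot

variable {ℓ : ℕ} {F : List (PolyTuple ℓ)}

lemma le_famDegree {t : PolyTuple ℓ} (ht : t ∈ F) (i : Fin ℓ) :
    (t i).natDegree ≤ famDegree F := by
  induction F with
  | nil => simp at ht
  | cons a F ih =>
    rcases List.mem_cons.mp ht with rfl | ht
    · exact (Finset.le_sup (f := fun i => (t i).natDegree) (Finset.mem_univ i)).trans
        (le_max_left _ _)
    · exact (ih ht).trans (le_max_right _ _)

lemma exists_constBelow_natDegree_ne_zero {t : PolyTuple ℓ} (ht : ¬ IsConstTuple t) :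
    ∃ i, ConstBelow t i ∧ (t i).natDegree ≠ 0 := by
  obtain ⟨i, hi⟩ : ∃ i, (t i).natDegree ≠ 0 := by simpa [IsConstTuple] using ht
  obtain ⟨j, hj, hmin⟩ := wellFounded_lt.has_min {i | (t i).natDegree ≠ 0} ⟨i, hi⟩
  exact ⟨j, fun i' hi' => by_contra fun h => hmin i' h hi', hj⟩

/-- `i₀` is the last index `i` for which `𝒫ᵢ'` is non-empty. -/
lemma exists_last_level (hF : ∀ t ∈ F, ¬ IsConstTuple t) (hne : F ≠ []) :
    ∃ i₀ : Fin ℓ, (∃ t ∈ F, ConstBelow t i₀) ∧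
      ∀ t ∈ F, ConstBelow t i₀ → (t i₀).natDegree ≠ 0 := by
  classical
  set S := Finset.univ.filter fun i => ∃ t ∈ F, ConstBelow t i ∧ (t i).natDegree ≠ 0
  have hmem : ∀ t ∈ F, ∃ i ∈ S, (t i).natDegree ≠ 0 := fun t ht =>
    let ⟨i, hi⟩ := exists_constBelow_natDegree_ne_zero (hF t ht)
    ⟨i, Finset.mem_filter.mpr ⟨Finset.mem_univ i, t, ht, hi⟩, hi.2⟩
  obtain ⟨t, ht⟩ := List.exists_mem_of_ne_nil F hne
  have hS : S.Nonempty := let ⟨i, hi, _⟩ := hmem t ht; ⟨i, hi⟩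
  obtain ⟨-, t₀, ht₀, ht₀c, -⟩ := Finset.mem_filter.mp (S.max'_mem hS)
  refine ⟨S.max' hS, ⟨t₀, ht₀, ht₀c⟩, fun t ht htc => ?_⟩
  obtain ⟨i, hiS, hi⟩ := hmem t ht
  rcases (S.le_max' i hiS).lt_or_eq with hlt | heq
  · exact absurd (htc i hlt) hi
  · exact heq ▸ hi

lemma exists_pivot (hF : ∀ t ∈ F, ¬ IsConstTuple t) (hne : F ≠ []) :
    ∃ i₀ : Fin ℓ, ∃ d₀ ≠ 0, (∃ g ∈ F, ConstBelow g i₀ ∧ (g i₀).natDegree = d₀) ∧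
      ∀ t ∈ F, ConstBelow t i₀ → d₀ ≤ (t i₀).natDegree := by
  obtain ⟨i₀, ⟨t, ht, htc⟩, hi₀⟩ := exists_last_level hF hne
  obtain ⟨g, ⟨hg, hgc⟩, hmin⟩ := Set.exists_min_image {t | t ∈ F ∧ ConstBelow t i₀}
    (fun t => (t i₀).natDegree) (F.finite_toSet.subset fun _ h => h.1) ⟨t, ht, htc⟩
  exact ⟨i₀, _, hi₀ g hg hgc, ⟨g, hg, hgc, rfl⟩, fun t ht htc => hmin t ⟨ht, htc⟩⟩

lemma exists_vdc_tuple [NeZero ℓ] {t₁ g : PolyTuple ℓ} {rest : List (PolyTuple ℓ)} {i₀ : Fin ℓ}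
    {d₀ : ℕ} (hF : NiceTupleFamily (t₁ :: rest)) (hd : (t₁ 0).natDegree ≠ 0)
    (hg : g ∈ t₁ :: rest) (hgc : ConstBelow g i₀) (hgd : (g i₀).natDegree = d₀)
    (hmin : ∀ t ∈ t₁ :: rest, ConstBelow t i₀ → d₀ ≤ (t i₀).natDegree) :
    ∃ g ∈ t₁ :: rest, ConstBelow g i₀ ∧ (g i₀).natDegree = d₀ ∧
      ((t₁ 0 - g 0).natDegree = (t₁ 0).natDegree ∨
        g = t₁ ∧ ∀ t ∈ t₁ :: rest, (t₁ 0 - t 0).natDegree < (t₁ 0).natDegree) := by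
  by_cases hfar : ∃ g ∈ t₁ :: rest, ConstBelow g i₀ ∧ (g i₀).natDegree = d₀ ∧
      (t₁ 0 - g 0).natDegree = (t₁ 0).natDegree
  · obtain ⟨g, hg, hgc, hgd, hfar⟩ := hfar
    exact ⟨g, hg, hgc, hgd, Or.inl hfar⟩
  push Not at hfar
  have h1 := (niceTupleFamily_cons_iff.mp hF).1
  have hle : ∀ t ∈ t₁ :: rest, (t₁ 0 - t 0).natDegree ≤ (t₁ 0).natDegree := fun t ht =>
    (natDegree_sub_le _ _).trans (max_le le_rfl (h1 t ht))
  have hg0 : (g 0).natDegree = (t₁ 0).natDegree := by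
    by_contra hne
    exact hfar g hg hgc hgd
      (natDegree_sub_eq_left_of_natDegree_lt ((h1 g hg).lt_of_ne hne))
  obtain rfl : i₀ = 0 := by
    by_contra hi₀
    have := hgc 0 (Fin.pos_iff_ne_zero.mpr hi₀)
    omega
  have hconst : ∀ t : PolyTuple ℓ, ConstBelow t 0 := fun t i hi => absurd hi (Fin.not_lt_zero i)
  refine ⟨t₁, List.mem_cons_self, hconst t₁, hgd ▸ hg0.symm, Or.inr ⟨rfl, fun t ht => ?_⟩⟩
  refine (hle t ht).lt_of_ne (hfar t ht (hconst t) ?_)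
  exact le_antisymm (hgd ▸ hg0 ▸ h1 t ht) (hmin t ht (hconst t))

end Pivot

/-- **Lemma 5.3.** For a nice family of `ℓ`-tuples of polynomials with
`deg p_{1,1} ≥ 2`, there is an `ℓ`-tuple `(p₁,…,p_ℓ)` in the family such that for all
sufficiently large `h`, the family `(p₁,…,p_ℓ,h)-vdC(𝒫₁,…,𝒫_ℓ)` is nice and has
strictly smaller type. -/
theorem nice_tuple_family_vdc_reduction {ℓ : ℕ} [NeZero ℓ] (F : List (PolyTuple ℓ))
    (hnoconst : ∀ t ∈ F, ¬ IsConstTuple t)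
    (hnice : NiceTupleFamily F)
    (hdeg : 2 ≤ (F.headI 0).natDegree) :
    ∃ g ∈ F, ∃ h₀ : ℕ, ∀ h : ℕ, h₀ ≤ h →
      NiceTupleFamily (vdcOp g h F) ∧
      List.Lex (· < ·) (typeList (famDegree F) (vdcOp g h F))
        (typeList (famDegree F) F) := by
  have ⟨t₁, rest, hF, _⟩ := hnice
  subst hF
  rw [List.headI_cons] at hdeg
  obtain ⟨i₀, d₀, hd₀, ⟨g, hg, hgc, hgd⟩, hmin⟩ := exists_pivot hnoconst (List.cons_ne_nil _ _)
  obtain ⟨g, hg, hgc, hgd, hcase⟩ := exists_vdc_tuple hnice (by omega) hg hgc hgd hmin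
  obtain ⟨h₀, hh₀⟩ := eventually_atTop.mp (eventually_niceTupleFamily_vdcOp hnice hdeg hg hcase)
  exact ⟨g, hg, h₀, fun h hh => ⟨hh₀ h hh,
    typeList_vdcOp_lt hg hgc hgd hmin hd₀ (hgd ▸ le_famDegree hg i₀)⟩⟩
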